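/- Suppose there exists a point x = (y₁, y₂, y₃, v₁, v₂, v₃) ∈ ℝ⁶ with all six coordinates positive satisfying F(x) = 0, and assume R₁ ≠ R₂ and R₁ ≠ R₃. Then necessarily R₁ > 1, R₁ > R₂ and R₁ > R₃. -/
import Mathlib


/-- The HBV three-strain vector field `F(y₁,y₂,y₃,v₁,v₂,v₃)`, with `β = 1 − y₁ − y₂ − y₃`. -/
noncomputable def Fhbv (α₁ α₂ α₃ δ₁ δ₂ δ₃ c p₁ p₂ q₂ q₃ r₃ : ℝ) (x : Fin 6 → ℝ) :
    Fin 6 → ℝ :=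
  ![α₁ * (1 - x 0 - x 1 - x 2) * x 3 - δ₁ * x 0,
    α₂ * (1 - x 0 - x 1 - x 2) * x 4 - δ₂ * x 1,
    α₃ * (1 - x 0 - x 1 - x 2) * x 5 - δ₃ * x 2,
    p₁ * x 0 - c * x 3,
    p₂ * x 0 + q₂ * x 1 - c * x 4,
    q₃ * x 1 + r₃ * x 2 - c * x 5]

/-- if some coordinatewise-positive point is a zero of F and R₁ ≠ R₂,
R₁ ≠ R₃, then necessarily R₁ > 1, R₁ > R₂ and R₁ > R₃. -/
theorem stmt_10 (α₁ α₂ α₃ δ₁ δ₂ δ₃ c p₁ p₂ q₂ q₃ r₃ : ℝ)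
    (hα₁ : 0 < α₁) (hα₂ : 0 < α₂) (hα₃ : 0 < α₃)
    (hδ₁ : 0 < δ₁) (hδ₂ : 0 < δ₂) (hδ₃ : 0 < δ₃) (hc : 0 < c)
    (hp₁ : 0 < p₁) (hp₂ : 0 < p₂) (hq₂ : 0 < q₂) (hq₃ : 0 < q₃) (hr₃ : 0 < r₃)
    (hex : ∃ x : Fin 6 → ℝ, (∀ i, 0 < x i) ∧
      Fhbv α₁ α₂ α₃ δ₁ δ₂ δ₃ c p₁ p₂ q₂ q₃ r₃ x = 0)
    (h12 : α₁ * p₁ / (c * δ₁) ≠ α₂ * q₂ / (c * δ₂))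
    (h13 : α₁ * p₁ / (c * δ₁) ≠ α₃ * r₃ / (c * δ₃)) :
    1 < α₁ * p₁ / (c * δ₁) ∧
      α₂ * q₂ / (c * δ₂) < α₁ * p₁ / (c * δ₁) ∧
      α₃ * r₃ / (c * δ₃) < α₁ * p₁ / (c * δ₁) := by
  obtain ⟨x, hpos, hF⟩ := hex
  have e0 : α₁ * (1 - x 0 - x 1 - x 2) * x 3 - δ₁ * x 0 = 0 := congrFun hF 0
  have e1 : α₂ * (1 - x 0 - x 1 - x 2) * x 4 - δ₂ * x 1 = 0 := congrFun hF 1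
  have e2 : α₃ * (1 - x 0 - x 1 - x 2) * x 5 - δ₃ * x 2 = 0 := congrFun hF 2
  have e3 : p₁ * x 0 - c * x 3 = 0 := congrFun hF 3
  have e4 : p₂ * x 0 + q₂ * x 1 - c * x 4 = 0 := congrFun hF 4
  have e5 : q₃ * x 1 + r₃ * x 2 - c * x 5 = 0 := congrFun hF 5
  rw [sub_eq_zero] at e0 e1 e2 e3 e4 e5
  have h0 := hpos 0
  have h1 := hpos 1
  have h2 := hpos 2
  have h3 := hpos 3
  have h4 := hpos 4
  have h5 := hpos 5
  set β : ℝ := 1 - x 0 - x 1 - x 2 with hβ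
  have hβpos : 0 < β := by
    by_contra hh
    push_neg at hh
    have hle := mul_nonpos_of_nonneg_of_nonpos (mul_pos hα₁ h3).le hh
    nlinarith [mul_pos hδ₁ h0]
  have hβlt : β < 1 := by simp only [hβ]; linarith
  have hkey : α₁ * p₁ * β = c * δ₁ := by
    have h' : α₁ * p₁ * β * x 0 = c * δ₁ * x 0 := by
      linear_combination c * e0 + α₁ * β * e3
    exact mul_right_cancel₀ h0.ne' h'
  have hcd1 : 0 < c * δ₁ := by positivity
  have hcd2 : 0 < c * δ₂ := by positivity
  have hcd3 : 0 < c * δ₃ := by positivity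
  have hkey2 : α₂ * q₂ * β < c * δ₂ := by
    have h' : (c * δ₂ - α₂ * q₂ * β) * x 1 = α₂ * β * p₂ * x 0 := by
      linear_combination -(c * e1) - α₂ * β * e4
    have hr : 0 < α₂ * β * p₂ * x 0 := by positivity
    by_contra hh
    push_neg at hh
    nlinarith [mul_nonpos_of_nonpos_of_nonneg
      (by linarith : c * δ₂ - α₂ * q₂ * β ≤ 0) h1.le]
  have hkey3 : α₃ * r₃ * β < c * δ₃ := by
    have h' : (c * δ₃ - α₃ * r₃ * β) * x 2 = α₃ * β * q₃ * x 1 := by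
      linear_combination -(c * e2) - α₃ * β * e5
    have hr : 0 < α₃ * β * q₃ * x 1 := by positivity
    by_contra hh
    push_neg at hh
    nlinarith [mul_nonpos_of_nonpos_of_nonneg
      (by linarith : c * δ₃ - α₃ * r₃ * β ≤ 0) h2.le]
  refine ⟨?_, ?_, ?_⟩
  · rw [lt_div_iff₀ hcd1]
    have hh := mul_pos (mul_pos hα₁ hp₁) (by linarith : (0:ℝ) < 1 - β)
    linarith [hkey, hh, (by ring : α₁ * p₁ * (1 - β) = α₁ * p₁ - α₁ * p₁ * β)]
  · rw [div_lt_div_iff₀ hcd2 hcd1, ← hkey]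
    have hh := mul_lt_mul_of_pos_left hkey2 (mul_pos hα₁ hp₁)
    linarith [hh, (by ring : α₁ * p₁ * (α₂ * q₂ * β) = α₂ * q₂ * (α₁ * p₁ * β))]
  · rw [div_lt_div_iff₀ hcd3 hcd1, ← hkey]
    have hh := mul_lt_mul_of_pos_left hkey3 (mul_pos hα₁ hp₁)
    linarith [hh, (by ring : α₁ * p₁ * (α₃ * r₃ * β) = α₃ * r₃ * (α₁ * p₁ * β))]
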